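/- Let k be a field of characteristic p > 0, let f ∈ k[[t₁,t₂]] be a formal power series not divisible by t₁, and write f(t₁,t₂) = t₂^e·u(t₂) + t₁·h(t₁,t₂) where u(t₂) ∈ k[[t₂]] is a unit and e ≥ 1. Let α₁ = a₁·u^{k₁} and α₂ = a₂·u^{k₂} in k[[u]] with a₁, a₂ units and k₁, k₂ ≥ 1. Then for all sufficiently large n, the u-adic valuation of f(α₁^{p^n}, α₂) equals e·k₂; in particular dim_k(k[[u]]/(f(α₁^{p^n},α₂))) = e·k₂ is bounded independently of n. -/

import Mathlib

open PowerSeries Filter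

/-!
In `f(α₁^{pⁿ}, α₂)` every monomial `t₁^d₁ t₂^d₂` with `d₁ ≥ 1` has `u`-adic order at least
`ord α₁^{pⁿ} ≥ k₁ pⁿ`, which exceeds `e k₂` for large `n`. So in degrees `≤ e k₂` only the
`t₁`-free part `t₂^e u(t₂)` of `f` contributes, and its lowest term is `u(0) α₂^e`, of order
exactly `e k₂`. Over a field, `g = X^(ord g) · unit`, so `k⟦X⟧ ⧸ (g) ≅ k[X] ⧸ (X^(ord g))` has
dimension `ord g`.
-/

/-- Substitution of two one-variable power series (with zero constant term) into a
two-variable power series, defined coefficientwise. -/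
noncomputable def substPair {k : Type*} [Field k] (a₀ a₁ : PowerSeries k)
    (f : MvPowerSeries (Fin 2) k) : PowerSeries k :=
  PowerSeries.mk fun j =>
    ∑ d ∈ Finset.range (j + 1) ×ˢ Finset.range (j + 1),
      (MvPowerSeries.coeff (Finsupp.single (0 : Fin 2) d.1 + Finsupp.single (1 : Fin 2) d.2) f)
        * PowerSeries.coeff j (a₀ ^ d.1 * a₁ ^ d.2)

/-- The embedding of a one-variable power series `u(t₂)` as a two-variable power series. -/
noncomputable def toMv {k : Type*} [Field k] (u : PowerSeries k) : MvPowerSeries (Fin 2) k :=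
  fun d => if d 0 = 0 then PowerSeries.coeff (d 1) u else 0

section

variable {k : Type*} [Field k]

theorem finrank_quotient_span_of_order_eq {g : k⟦X⟧} {m : ℕ} (hg : g.order = m) :
    Module.finrank k (k⟦X⟧ ⧸ Ideal.span {g}) = m := by
  have hg0 : g ≠ 0 := order_finite_iff_ne_zero.mp (by simp [hg])
  have hdist : (Polynomial.X ^ m : Polynomial k).IsDistinguishedAt ⊥ :=
    ⟨⟨fun hn => by
      rw [Polynomial.natDegree_X_pow] at hn
      simp [Polynomial.coeff_X_pow, hn.ne]⟩, Polynomial.monic_X_pow m⟩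
  have H : g.IsWeierstrassFactorizationAt (Polynomial.X ^ m) g.divXPowOrder ⊥ := by
    refine ⟨hdist, isUnit_divided_by_X_pow_order hg0, ?_⟩
    conv_lhs => rw [← X_pow_order_mul_divXPowOrder (f := g)]
    rw [hg, ENat.toNat_natCast, Polynomial.coe_pow, Polynomial.coe_X]
  rw [← H.algEquivQuotient.toLinearEquiv.finrank_eq, finrank_quotient_span_eq_natDegree,
    Polynomial.natDegree_X_pow]

theorem natCast_mul_le_order_mul_X_pow_pow (a : k⟦X⟧) (m q : ℕ) :
    ((m * q : ℕ) : ℕ∞) ≤ ((a * X ^ m) ^ q).order := by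
  rw [mul_pow, ← pow_mul, order_mul, order_X_pow]
  exact le_add_self

theorem coeff_pow_mul_pow_eq_zero_of_lt {α β : k⟦X⟧} {j d₁ d₂ : ℕ}
    (hj : (j : ℕ∞) < d₁ • α.order + d₂ • β.order) : coeff j (α ^ d₁ * β ^ d₂) = 0 :=
  coeff_of_lt_order _ (by rwa [order_mul, order_pow, order_pow])

theorem coeff_substPair (α β : k⟦X⟧) (f : MvPowerSeries (Fin 2) k) (j : ℕ) :
    coeff j (substPair α β f) = ∑ d ∈ Finset.range (j + 1) ×ˢ Finset.range (j + 1),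
      MvPowerSeries.coeff (Finsupp.single 0 d.1 + Finsupp.single 1 d.2) f *
        coeff j (α ^ d.1 * β ^ d.2) :=
  coeff_mk _ _

theorem coeff_single_one_X_pow_mul_toMv_add_X_mul (u : k⟦X⟧) (h : MvPowerSeries (Fin 2) k)
    (e d : ℕ) :
    MvPowerSeries.coeff (Finsupp.single 1 d)
        (MvPowerSeries.X 1 ^ e * toMv u + MvPowerSeries.X 0 * h) =
      if e ≤ d then coeff (d - e) u else 0 := by
  have h01 : (0 : Fin 2) ≠ 1 := by decide
  have hX0 : MvPowerSeries.coeff (Finsupp.single 1 d) (MvPowerSeries.X 0 * h) = 0 := by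
    rw [← pow_one (MvPowerSeries.X 0), MvPowerSeries.X_pow_eq, MvPowerSeries.coeff_monomial_mul,
      if_neg]
    rw [Finsupp.single_le_iff, Finsupp.single_eq_of_ne h01]
    omega
  rw [map_add, hX0, add_zero, MvPowerSeries.X_pow_eq, MvPowerSeries.coeff_monomial_mul]
  by_cases hed : e ≤ d
  · rw [if_pos (by rwa [Finsupp.single_le_iff, Finsupp.single_eq_same]), if_pos hed, one_mul,
      ← Finsupp.single_tsub, MvPowerSeries.coeff_apply]
    simp [toMv]
  · rw [if_neg (by rwa [Finsupp.single_le_iff, Finsupp.single_eq_same]), if_neg hed]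

theorem coeff_substPair_summand_eq_zero {α β u : k⟦X⟧} (h : MvPowerSeries (Fin 2) k)
    {e m j : ℕ} (d : ℕ × ℕ) (hβ : β.order = m) (hm : 1 ≤ m)
    (hα : ((e * m : ℕ) : ℕ∞) < α.order) (hj : j ≤ e * m) (hne : (d, j) ≠ ((0, e), e * m)) :
    MvPowerSeries.coeff (Finsupp.single 0 d.1 + Finsupp.single 1 d.2)
        (MvPowerSeries.X 1 ^ e * toMv u + MvPowerSeries.X 0 * h) *
      coeff j (α ^ d.1 * β ^ d.2) = 0 := by
  obtain ⟨d₁, d₂⟩ := d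
  rcases Nat.eq_zero_or_pos d₁ with rfl | hd₁
  · rw [Finsupp.single_zero, zero_add, coeff_single_one_X_pow_mul_toMv_add_X_mul]
    split_ifs with hed
    · refine mul_eq_zero_of_right _ (coeff_pow_mul_pow_eq_zero_of_lt ?_)
      have hjd : j < d₂ * m := by
        refine lt_of_le_of_ne (hj.trans (Nat.mul_le_mul_right m hed)) fun hjd => hne ?_
        obtain rfl : d₂ = e := le_antisymm (Nat.le_of_mul_le_mul_right (hjd ▸ hj) hm) hed
        rw [hjd]
      simpa [hβ] using (by exact_mod_cast hjd : (j : ℕ∞) < (d₂ * m : ℕ))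
    · exact zero_mul _
  · refine mul_eq_zero_of_right _ (coeff_pow_mul_pow_eq_zero_of_lt ?_)
    calc (j : ℕ∞) ≤ (e * m : ℕ) := by exact_mod_cast hj
      _ < α.order := hα
      _ ≤ d₁ • α.order := le_self_nsmul zero_le hd₁.ne'
      _ ≤ _ := le_self_add

theorem order_substPair_X_pow_mul_toMv_add_X_mul {α β u : k⟦X⟧} (h : MvPowerSeries (Fin 2) k)
    {e m : ℕ} (hu : IsUnit u) (hβ : β.order = m) (hm : 1 ≤ m)
    (hα : ((e * m : ℕ) : ℕ∞) < α.order) :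
    (substPair α β (MvPowerSeries.X 1 ^ e * toMv u + MvPowerSeries.X 0 * h)).order
      = (e * m : ℕ) := by
  have hβe : (β ^ e).order = (e * m : ℕ) := by simp [order_pow, hβ]
  rw [order_eq_nat]
  constructor
  -- `hm` keeps `(0, e)` inside the truncation `range (e * m + 1)` in the definition of `substPair`
  · rw [coeff_substPair, Finset.sum_eq_single_of_mem (0, e)
      (by simp only [Finset.mem_product, Finset.mem_range]; constructor <;> nlinarith)
      fun d _ hd => coeff_substPair_summand_eq_zero h d hβ hm hα le_rfl (by simpa using hd)]
    rw [Finsupp.single_zero, zero_add, coeff_single_one_X_pow_mul_toMv_add_X_mul, if_pos le_rfl,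
      Nat.sub_self, pow_zero, one_mul, coeff_zero_eq_constantCoeff]
    exact mul_ne_zero (isUnit_iff_constantCoeff.mp hu).ne_zero (order_eq_nat.mp hβe).1
  · intro j hj
    rw [coeff_substPair]
    exact Finset.sum_eq_zero fun d _ =>
      coeff_substPair_summand_eq_zero h d hβ hm hα hj.le (by simp [hj.ne])

end

theorem stmt0_general (k : Type*) [Field k] (p : ℕ) [Fact p.Prime]
    (f h : MvPowerSeries (Fin 2) k) (u : PowerSeries k) (e : ℕ)
    (hu : IsUnit u)
    (hf : f = (MvPowerSeries.X (1 : Fin 2)) ^ e * toMv u + (MvPowerSeries.X (0 : Fin 2)) * h)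
    (a₁ a₂ : PowerSeries k) (ha₂ : IsUnit a₂)
    (k₁ k₂ : ℕ) (hk₁ : 1 ≤ k₁) (hk₂ : 1 ≤ k₂) :
    ∃ N : ℕ, ∀ n ≥ N,
      (substPair ((a₁ * PowerSeries.X ^ k₁) ^ p ^ n) (a₂ * PowerSeries.X ^ k₂) f).order
          = (e * k₂ : ℕ) ∧
      Module.finrank k
          (PowerSeries k ⧸ Ideal.span
            {substPair ((a₁ * PowerSeries.X ^ k₁) ^ p ^ n) (a₂ * PowerSeries.X ^ k₂) f})
          = e * k₂ := by
  refine ⟨e * k₂ + 1, fun n hn => ?_⟩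
  have hβ : (a₂ * X ^ k₂).order = (k₂ : ℕ∞) := by
    rw [order_mul, order_zero_of_unit ha₂, order_X_pow, zero_add]
  have hpn : e * k₂ < k₁ * p ^ n :=
    calc e * k₂ < n := hn
      _ < p ^ n := Nat.lt_pow_self (Fact.out : p.Prime).one_lt
      _ ≤ k₁ * p ^ n := Nat.le_mul_of_pos_left _ hk₁
  have hα : ((e * k₂ : ℕ) : ℕ∞) < ((a₁ * X ^ k₁) ^ p ^ n).order :=
    (Nat.cast_lt.mpr hpn).trans_le (natCast_mul_le_order_mul_X_pow_pow a₁ k₁ (p ^ n))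
  have horder := hf ▸ order_substPair_X_pow_mul_toMv_add_X_mul h hu hβ hk₂ hα
  exact ⟨horder, finrank_quotient_span_of_order_eq horder⟩

/-- if `t₁ ∤ f` and `f = t₂^e u(t₂) + t₁ h(t₁,t₂)` with `u` a unit and `e ≥ 1`,
and `α₁ = a₁ u^{k₁}`, `α₂ = a₂ u^{k₂}` with `a₁, a₂` units and `k₁, k₂ ≥ 1`, then for all
sufficiently large `n` the `u`-adic valuation of `f(α₁^{p^n}, α₂)` equals `e·k₂`, and
`dim_k k[[u]]/(f(α₁^{p^n},α₂)) = e·k₂` is bounded independently of `n`. -/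
theorem stmt0 (k : Type*) [Field k] (p : ℕ) [Fact p.Prime] [CharP k p]
    (f h : MvPowerSeries (Fin 2) k) (u : PowerSeries k) (e : ℕ)
    (he : 1 ≤ e) (hu : IsUnit u)
    (hft : ¬ (MvPowerSeries.X (0 : Fin 2) ∣ f))
    (hf : f = (MvPowerSeries.X (1 : Fin 2)) ^ e * toMv u + (MvPowerSeries.X (0 : Fin 2)) * h)
    (a₁ a₂ : PowerSeries k) (ha₁ : IsUnit a₁) (ha₂ : IsUnit a₂)
    (k₁ k₂ : ℕ) (hk₁ : 1 ≤ k₁) (hk₂ : 1 ≤ k₂) :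
    ∃ N : ℕ, ∀ n ≥ N,
      (substPair ((a₁ * PowerSeries.X ^ k₁) ^ p ^ n) (a₂ * PowerSeries.X ^ k₂) f).order
          = (e * k₂ : ℕ) ∧
      Module.finrank k
          (PowerSeries k ⧸ Ideal.span
            {substPair ((a₁ * PowerSeries.X ^ k₁) ^ p ^ n) (a₂ * PowerSeries.X ^ k₂) f})
          = e * k₂ :=
  stmt0_general k p f h u e hu hf a₁ a₂ ha₂ k₁ k₂ hk₁ hk₂
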